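/- Let X and Y be Banach spaces, let T : Y → X be a bounded linear operator, and suppose T* (the adjoint of T, from X* to Y*) is injective. If Y* is strictly convex, then the norm on X* defined by |x*| := ‖x*‖ + ‖T* x*‖ is an equivalent strictly convex norm on X*. -/

import Mathlib

open NormedSpace

/-- The adjoint `T* : X* → Y*` of a bounded operator `T : Y → X`. -/
noncomputable def adj {Y X : Type*} [SeminormedAddCommGroup Y] [NormedSpace ℝ Y]
    [SeminormedAddCommGroup X] [NormedSpace ℝ X] (T : Y →L[ℝ] X) :
    StrongDual ℝ X →L[ℝ] StrongDual ℝ Y :=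
  LinearMap.mkContinuous
    { toFun := fun f => f.comp T
      map_add' := fun f g => by ext y; simp
      map_smul' := fun c f => by ext y; simp }
    ‖T‖ (fun f => by simpa [mul_comm] using f.opNorm_comp_le T)

/-!
Write `|x| = ‖x‖ + ‖S x‖` with `S = T*`. If `|x| = |y| = 1` and `|x + y| = 2`, both triangle
inequalities are equalities, so `S x` and `S y` lie on a common ray of the strictly convex space
`Y*`; injectivity of `S` pulls this back to `x` and `y`, and two vectors on a common ray with the
same value of `|·|` coincide.
-/

theorem norm_adj_le {X Y : Type*} [SeminormedAddCommGroup Y] [NormedSpace ℝ Y]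
    [SeminormedAddCommGroup X] [NormedSpace ℝ X] (T : Y →L[ℝ] X) : ‖adj T‖ ≤ ‖T‖ :=
  LinearMap.mkContinuous_norm_le _ (norm_nonneg T) _

namespace ContinuousLinearMap

section

variable {E F : Type*} [SeminormedAddCommGroup E] [NormedSpace ℝ E]
  [SeminormedAddCommGroup F] [NormedSpace ℝ F] (S : E →L[ℝ] F)

theorem norm_add_norm_apply_add_le (x y : E) :
    ‖x + y‖ + ‖S (x + y)‖ ≤ (‖x‖ + ‖S x‖) + (‖y‖ + ‖S y‖) := by
  rw [map_add]
  linarith [norm_add_le x y, norm_add_le (S x) (S y)]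

theorem norm_add_norm_apply_smul (c : ℝ) (x : E) :
    ‖c • x‖ + ‖S (c • x)‖ = |c| * (‖x‖ + ‖S x‖) := by
  rw [map_smul, norm_smul, norm_smul, Real.norm_eq_abs, mul_add]

theorem norm_add_norm_apply_le (x : E) : ‖x‖ + ‖S x‖ ≤ (1 + ‖S‖) * ‖x‖ := by
  linarith [S.le_opNorm x]

end

variable {E F : Type*} [NormedAddCommGroup E] [NormedSpace ℝ E]
  [NormedAddCommGroup F] [NormedSpace ℝ F] {S : E →L[ℝ] F}

theorem sameRay_of_norm_add_norm_apply_add_eq [StrictConvexSpace ℝ F]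
    (hS : Function.Injective S) {x y : E}
    (h : ‖x + y‖ + ‖S (x + y)‖ = (‖x‖ + ‖S x‖) + (‖y‖ + ‖S y‖)) : SameRay ℝ x y := by
  have hSxy : ‖S x + S y‖ = ‖S x‖ + ‖S y‖ := by
    rw [map_add] at h
    linarith [norm_add_le x y, norm_add_le (S x) (S y)]
  exact hS.sameRay_map_iff.mp (sameRay_iff_norm_add.mpr hSxy)

theorem _root_.SameRay.eq_of_norm_add_norm_apply_eq {x y : E} (hxy : SameRay ℝ x y)
    (h : ‖x‖ + ‖S x‖ = ‖y‖ + ‖S y‖) : x = y := by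
  rcases eq_or_ne x 0 with rfl | hx
  · rw [map_zero, norm_zero, norm_zero, zero_add] at h
    exact (norm_eq_zero.mp (by linarith [norm_nonneg y, norm_nonneg (S y)])).symm
  obtain ⟨r, hr, rfl⟩ := hxy.exists_nonneg_left hx
  rw [S.norm_add_norm_apply_smul, abs_of_nonneg hr] at h
  have hpos : 0 < ‖x‖ + ‖S x‖ := by positivity
  have hr1 : r = 1 := by nlinarith
  rw [hr1, one_smul]

end ContinuousLinearMap

open ContinuousLinearMap in
theorem renorm_dual_strictly_convex_general {X Y : Type*}
    [NormedAddCommGroup X] [NormedSpace ℝ X]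
    [NormedAddCommGroup Y] [NormedSpace ℝ Y]
    (T : Y →L[ℝ] X) (hinj : Function.Injective (adj T))
    [StrictConvexSpace ℝ (StrongDual ℝ Y)] :
    (∀ f g : StrongDual ℝ X,
        ‖f + g‖ + ‖adj T (f + g)‖ ≤ (‖f‖ + ‖adj T f‖) + (‖g‖ + ‖adj T g‖)) ∧
    (∀ (c : ℝ) (f : StrongDual ℝ X),
        ‖c • f‖ + ‖adj T (c • f)‖ = |c| * (‖f‖ + ‖adj T f‖)) ∧
    (∀ f : StrongDual ℝ X,
        ‖f‖ ≤ ‖f‖ + ‖adj T f‖ ∧ ‖f‖ + ‖adj T f‖ ≤ (1 + ‖T‖) * ‖f‖) ∧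
    (∀ f g : StrongDual ℝ X, ‖f‖ + ‖adj T f‖ = 1 → ‖g‖ + ‖adj T g‖ = 1 →
        ‖f + g‖ + ‖adj T (f + g)‖ = 2 → f = g) := by
  refine ⟨(adj T).norm_add_norm_apply_add_le, (adj T).norm_add_norm_apply_smul,
    fun f => ⟨le_add_of_nonneg_right (norm_nonneg _), ?_⟩, fun f g hf hg hfg => ?_⟩
  · calc ‖f‖ + ‖adj T f‖ ≤ (1 + ‖adj T‖) * ‖f‖ := (adj T).norm_add_norm_apply_le f
      _ ≤ (1 + ‖T‖) * ‖f‖ := by gcongr; exact norm_adj_le T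
  · have hray : SameRay ℝ f g :=
      sameRay_of_norm_add_norm_apply_add_eq hinj (by rw [hf, hg, hfg]; norm_num)
    exact hray.eq_of_norm_add_norm_apply_eq (hf.trans hg.symm)

/-- If `T* ` is injective and `Y*` is strictly convex, then
`|x*| := ‖x*‖ + ‖T* x*‖` is an equivalent strictly convex norm on `X*`. -/
theorem renorm_dual_strictly_convex {X Y : Type*}
    [NormedAddCommGroup X] [NormedSpace ℝ X] [CompleteSpace X]
    [NormedAddCommGroup Y] [NormedSpace ℝ Y] [CompleteSpace Y]
    (T : Y →L[ℝ] X) (hinj : Function.Injective (adj T))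
    [StrictConvexSpace ℝ (StrongDual ℝ Y)] :
    (∀ f g : StrongDual ℝ X,
        ‖f + g‖ + ‖adj T (f + g)‖ ≤ (‖f‖ + ‖adj T f‖) + (‖g‖ + ‖adj T g‖)) ∧
    (∀ (c : ℝ) (f : StrongDual ℝ X),
        ‖c • f‖ + ‖adj T (c • f)‖ = |c| * (‖f‖ + ‖adj T f‖)) ∧
    (∀ f : StrongDual ℝ X,
        ‖f‖ ≤ ‖f‖ + ‖adj T f‖ ∧ ‖f‖ + ‖adj T f‖ ≤ (1 + ‖T‖) * ‖f‖) ∧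
    (∀ f g : StrongDual ℝ X, ‖f‖ + ‖adj T f‖ = 1 → ‖g‖ + ‖adj T g‖ = 1 →
        ‖f + g‖ + ‖adj T (f + g)‖ = 2 → f = g) :=
  renorm_dual_strictly_convex_general T hinj
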